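/- Let i,j,k be integers with i ≥ |j| and i ≥ |k| and i ≥ 1. The number of shortest 26-neighbor paths in Z^3 from (0,0,0) to (i,j,k) equals f8(i,j) · f8(i,k), where f8(i,m) is the number of shortest 8-neighbor paths in Z^2 from (0,0) to (i,m). -/
import Mathlib


/-- Two points of `ℤ³` are 26-neighbors: distinct and each coordinate differs by at most 1. -/
def Adj26 (p q : ℤ × ℤ × ℤ) : Prop :=
  p ≠ q ∧ (p.1 - q.1).natAbs ≤ 1 ∧ (p.2.1 - q.2.1).natAbs ≤ 1 ∧ (p.2.2 - q.2.2).natAbs ≤ 1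

/-- `f` is a 26-neighbor path of length `n` from `p` to `q`. -/
def IsPath26 (n : ℕ) (f : Fin (n + 1) → ℤ × ℤ × ℤ) (p q : ℤ × ℤ × ℤ) : Prop :=
  f 0 = p ∧ f (Fin.last n) = q ∧ ∀ t : Fin n, Adj26 (f t.castSucc) (f t.succ)

/-- Two points of `ℤ²` are 8-neighbors (king moves): distinct and each coordinate differs
by at most 1. -/
def Adj8 (p q : ℤ × ℤ) : Prop :=
  p ≠ q ∧ (p.1 - q.1).natAbs ≤ 1 ∧ (p.2 - q.2).natAbs ≤ 1

/-- `f` is an 8-neighbor path of length `n` from `p` to `q`. -/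
def IsPath8 (n : ℕ) (f : Fin (n + 1) → ℤ × ℤ) (p q : ℤ × ℤ) : Prop :=
  f 0 = p ∧ f (Fin.last n) = q ∧ ∀ t : Fin n, Adj8 (f t.castSucc) (f t.succ)

/-- `f8 n q` : the number of 8-neighbor paths of length `n` from the origin to `q`;
when `n` is the 8-neighbor distance, this is the number of shortest 8-neighbor paths. -/
noncomputable def f8 (n : ℕ) (q : ℤ × ℤ) : ℕ :=
  Nat.card {f : Fin (n + 1) → ℤ × ℤ // IsPath8 n f (0, 0) q}

lemma seq_steps (n : ℕ) (g : Fin (n+1) → ℤ) (h0 : g 0 = 0)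
    (hl : g (Fin.last n) = (n:ℤ))
    (hadj : ∀ t : Fin n, (g t.castSucc - g t.succ).natAbs ≤ 1) :
    ∀ t : Fin (n+1), g t = ((t : ℕ) : ℤ) := by
  have hle : ∀ t : Fin (n+1), g t ≤ ((t : ℕ) : ℤ) := by
    intro t
    induction t using Fin.induction with
    | zero => simp [h0]
    | succ t ih =>
      have h2 := hadj t
      have e1 : ((t.succ : Fin (n+1)) : ℕ) = (t:ℕ)+1 := rfl
      have e2 : ((t.castSucc : Fin (n+1)) : ℕ) = (t:ℕ) := rfl
      rw [e2] at ih
      rw [e1]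
      push_cast at ih ⊢
      omega
  have hge : ∀ t : Fin (n+1), ((t:ℕ):ℤ) ≤ g t := by
    intro t
    induction t using Fin.reverseInduction with
    | last => simp [hl]
    | cast t ih =>
      have h2 := hadj t
      have e1 : ((t.succ : Fin (n+1)) : ℕ) = (t:ℕ)+1 := rfl
      have e2 : ((t.castSucc : Fin (n+1)) : ℕ) = (t:ℕ) := rfl
      rw [e1] at ih
      rw [e2]
      push_cast at ih ⊢
      omega
  intro t
  have := hle t; have := hge t; omega

lemma path26_fst (n : ℕ) (j k : ℤ) (f : Fin (n+1) → ℤ × ℤ × ℤ)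
    (hf : IsPath26 n f (0,0,0) ((n:ℤ), j, k)) :
    ∀ t : Fin (n+1), (f t).1 = ((t:ℕ):ℤ) :=
  seq_steps n (fun t => (f t).1) (by simp [hf.1]) (by simp [hf.2.1])
    (fun t => (hf.2.2 t).2.1)

lemma path8_fst (n : ℕ) (m : ℤ) (f : Fin (n+1) → ℤ × ℤ)
    (hf : IsPath8 n f (0,0) ((n:ℤ), m)) :
    ∀ t : Fin (n+1), (f t).1 = ((t:ℕ):ℤ) :=
  seq_steps n (fun t => (f t).1) (by simp [hf.1]) (by simp [hf.2.1])
    (fun t => (hf.2.2 t).2.1)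

/-- For `i ≥ |j|`, `i ≥ |k|`, `i ≥ 1`, the number of shortest 26-neighbor paths
(of length `i`) from the origin to `(i,j,k)` equals `f8(i,j) · f8(i,k)`. -/
theorem count_shortest_paths_26N (i j k : ℤ) (hi : 1 ≤ i) (hj : |j| ≤ i) (hk : |k| ≤ i) :
    Nat.card {f : Fin (i.toNat + 1) → ℤ × ℤ × ℤ //
        IsPath26 i.toNat f (0, 0, 0) (i, j, k)} =
      f8 i.toNat (i, j) * f8 i.toNat (i, k) := by
  obtain ⟨n, rfl⟩ : ∃ n : ℕ, i = (n : ℤ) :=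
    ⟨i.toNat, (Int.toNat_of_nonneg (by omega)).symm⟩
  simp only [Int.toNat_natCast, f8]
  rw [← Nat.card_prod]
  refine Nat.card_congr
    (Equiv.ofBijective
      (fun f => (⟨fun t => ((f.1 t).1, (f.1 t).2.1), ?_⟩,
                 ⟨fun t => ((f.1 t).1, (f.1 t).2.2), ?_⟩)) ⟨?_, ?_⟩)
  · -- first projection is a path
    obtain ⟨f, hf⟩ := f
    have key := path26_fst n j k f hf
    refine ⟨by simp [hf.1], by simp [hf.2.1], fun t => ?_⟩
    obtain ⟨hne, h1, h2, h3⟩ := hf.2.2 t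
    refine ⟨fun h => ?_, h1, h2⟩
    have := congrArg Prod.fst h
    simp only at this
    rw [key t.castSucc, key t.succ] at this
    simp only [Fin.val_succ, Fin.coe_castSucc] at this
    omega
  · obtain ⟨f, hf⟩ := f
    have key := path26_fst n j k f hf
    refine ⟨by simp [hf.1], by simp [hf.2.1], fun t => ?_⟩
    obtain ⟨hne, h1, h2, h3⟩ := hf.2.2 t
    refine ⟨fun h => ?_, h1, h3⟩
    have := congrArg Prod.fst h
    simp only at this
    rw [key t.castSucc, key t.succ] at this
    simp only [Fin.val_succ, Fin.coe_castSucc] at this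
    omega
  · -- injective
    rintro ⟨f, hf⟩ ⟨g, hg⟩ h
    simp only [Prod.mk.injEq, Subtype.mk.injEq] at h
    obtain ⟨h1, h2⟩ := h
    refine Subtype.ext (funext fun t => ?_)
    have e1 := congrFun h1 t
    have e2 := congrFun h2 t
    simp only [Prod.mk.injEq] at e1 e2
    exact Prod.ext e1.1 (Prod.ext e1.2 e2.2)
  · -- surjective
    rintro ⟨⟨g, hg⟩, ⟨h, hh⟩⟩
    have keyg := path8_fst n j g hg
    have keyh := path8_fst n k h hh
    refine ⟨⟨fun t => ((g t).1, (g t).2, (h t).2), ?_⟩, ?_⟩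
    · refine ⟨?_, ?_, fun t => ?_⟩
      · simp only [hg.1, hh.1]
      · simp only [hg.2.1, hh.2.1]
      · obtain ⟨gne, g1, g2⟩ := hg.2.2 t
        obtain ⟨hne, h1, h2⟩ := hh.2.2 t
        refine ⟨fun e => ?_, g1, g2, h2⟩
        have := congrArg Prod.fst e
        simp only at this
        rw [keyg t.castSucc, keyg t.succ] at this
        simp only [Fin.val_succ, Fin.coe_castSucc] at this
        omega
    · refine Prod.ext (Subtype.ext (funext fun t => rfl))
        (Subtype.ext (funext fun t => Prod.ext (by rw [keyg t, keyh t]) rfl))
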